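/- Counterexample squeezing (Lemma 1): Let TS = (Σ, Init, Tr, P) be a recidivist transition system and let ⋎ : Σ → Σ be simulation-inducing for TS. Then for every state σ₀ ∈ Σ, if there exists a counterexample trace starting from σ₀, then there also exists a counterexample trace starting from ⋎(σ₀). -/
import Mathlib


/-- `TrPow Tr k σ σ'` : `σ'` is reachable from `σ` by a trace of length exactly `k`
(k-fold relational composition of `Tr`, with `TrPow Tr 0` the identity relation). -/
def TrPow {S : Type*} (Tr : S → S → Prop) : ℕ → S → S → Prop
  | 0 => fun σ σ' => σ = σ'
  | n + 1 => fun σ σ' => ∃ σ₁, Tr σ σ₁ ∧ TrPow Tr n σ₁ σ'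

/-- A counterexample trace starting from `σ₀`: `σ₀` is initial and some finite trace
from `σ₀` ends in a bad state. -/
def Counterexample {S : Type*} (Init : Set S) (Tr : S → S → Prop) (P : Set S)
    (σ₀ : S) : Prop :=
  σ₀ ∈ Init ∧ ∃ (n : ℕ) (σ : S), TrPow Tr n σ₀ σ ∧ σ ∉ P

/-- Recidivism: bad states have successors, and transitions from bad states lead
to bad states. -/
def Recidivist {S : Type*} (Tr : S → S → Prop) (P : Set S) : Prop :=
  (∀ σ, σ ∉ P → ∃ σ', Tr σ σ') ∧ (∀ σ σ', σ ∉ P → Tr σ σ' → σ' ∉ P)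

/-- A function `f : S → S` is simulation-inducing for `(Init, Tr, P)`:
initial anchor, simulation inducing (with parameters `n_σ ≥ 1`, `m_σ ≥ 0`),
and fault preservation. -/
def SimulationInducing {S : Type*} (Init : Set S) (Tr : S → S → Prop) (P : Set S)
    (f : S → S) : Prop :=
  (∀ σ, σ ∈ Init → f σ ∈ Init) ∧
  (∀ σ, ∃ n m : ℕ, 1 ≤ n ∧ ∀ σ', TrPow Tr n σ σ' → TrPow Tr m (f σ) (f σ')) ∧
  (∀ σ, σ ∉ P → f σ ∉ P)

lemma trPow_comp {S : Type*} {Tr : S → S → Prop} :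
    ∀ (a : ℕ) {b : ℕ} {σ σ₁ σ₂ : S}, TrPow Tr a σ σ₁ → TrPow Tr b σ₁ σ₂ →
      TrPow Tr (a + b) σ σ₂ := by
  intro a
  induction a with
  | zero => intro b σ σ₁ σ₂ h1 h2; cases h1; simpa using h2
  | succ n ih =>
    intro b σ σ₁ σ₂ h1 h2
    obtain ⟨τ, hτ, h1'⟩ := h1
    rw [Nat.succ_add]
    exact ⟨τ, hτ, ih h1' h2⟩

lemma trPow_split {S : Type*} {Tr : S → S → Prop} :
    ∀ (a : ℕ) {b : ℕ} {σ σ₂ : S}, TrPow Tr (a + b) σ σ₂ →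
      ∃ σ₁, TrPow Tr a σ σ₁ ∧ TrPow Tr b σ₁ σ₂ := by
  intro a
  induction a with
  | zero => intro b σ σ₂ h; exact ⟨σ, rfl, by simpa using h⟩
  | succ n ih =>
    intro b σ σ₂ h
    rw [Nat.succ_add] at h
    obtain ⟨τ, hτ, h'⟩ := h
    obtain ⟨σ₁, h1, h2⟩ := ih h'
    exact ⟨σ₁, ⟨τ, hτ, h1⟩, h2⟩

lemma bad_extend {S : Type*} {Tr : S → S → Prop} {P : Set S}
    (hrec : Recidivist Tr P) :
    ∀ (k : ℕ) {σ : S}, σ ∉ P → ∃ σ', TrPow Tr k σ σ' ∧ σ' ∉ P := by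
  intro k
  induction k with
  | zero => intro σ h; exact ⟨σ, rfl, h⟩
  | succ n ih =>
    intro σ h
    obtain ⟨τ, hτ⟩ := hrec.1 σ h
    obtain ⟨σ', h1, h2⟩ := ih (hrec.2 σ τ h hτ)
    exact ⟨σ', ⟨τ, hτ, h1⟩, h2⟩

/-- **Counterexample squeezing (Lemma 1).** For a recidivist transition system and a
simulation-inducing `f`, if there is a counterexample trace starting from `σ₀` then
there is a counterexample trace starting from `f σ₀`. -/
theorem counterexample_squeezing {S : Type*}
    (Init : Set S) (Tr : S → S → Prop) (P : Set S) (f : S → S)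
    (hrec : Recidivist Tr P)
    (hsim : SimulationInducing Init Tr P f) :
    ∀ σ₀ : S, Counterexample Init Tr P σ₀ → Counterexample Init Tr P (f σ₀) := by
  have key : ∀ n : ℕ, ∀ σ σ' : S, TrPow Tr n σ σ' → σ' ∉ P →
      ∃ (m : ℕ) (τ : S), TrPow Tr m (f σ) τ ∧ τ ∉ P := by
    intro n
    induction n using Nat.strong_induction_on with
    | _ n ih =>
      intro σ σ' htr hbad
      obtain ⟨nσ, mσ, hnσ, hstep⟩ := hsim.2.1 σ
      by_cases hle : nσ ≤ n
      · obtain ⟨σ₁, h1, h2⟩ := trPow_split nσ (b := n - nσ) (by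
          rwa [Nat.add_sub_cancel' hle])
        obtain ⟨m, τ, hτ, hτbad⟩ := ih (n - nσ) (by omega) σ₁ σ' h2 hbad
        exact ⟨mσ + m, τ, trPow_comp mσ (hstep σ₁ h1) hτ, hτbad⟩
      · obtain ⟨σ'', h1, h2⟩ := bad_extend hrec (nσ - n) hbad
        have : TrPow Tr nσ σ σ'' := by
          have := trPow_comp n htr h1
          rwa [Nat.add_sub_cancel' (le_of_not_ge hle)] at this
        exact ⟨mσ, f σ'', hstep σ'' this, hsim.2.2 σ'' h2⟩
  rintro σ₀ ⟨hinit, n, σ, htr, hbad⟩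
  obtain ⟨m, τ, hτ, hτbad⟩ := key n σ₀ σ htr hbad
  exact ⟨hsim.1 σ₀ hinit, m, τ, hτ, hτbad⟩
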